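/- Let T, N, B : ℝ² → ℝ³ be smooth (C^∞) maps of (t,x) that are orthonormal at every point with B = T × N, and let κ, τ : ℝ² → ℝ be smooth with κ(t,x) > 0, satisfying the Serret–Frenet equations ∂_x T = κN, ∂_x N = -κT + τB, ∂_x B = -τN at every (t,x). Suppose the tangent vector evolves by the Heisenberg (vortex filament) flow ∂_t T = -κτ N + (∂_x κ) B (equivalently ∂_t T = T × ∂_x²T). Then the curvature and torsion satisfy the vortex filament equations ∂_t κ = -κ ∂_x τ - 2 (∂_x κ) τ and ∂_t τ = ∂_x( ∂_x²κ/κ - τ² + (1/2)κ² ). -/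

import Mathlib

/-!
The Serret–Frenet equations prescribe `∂ₓ` of the frame and the flow prescribes `∂ₜT`; the only
constraint linking them is that mixed partials commute. Pairing `∂ₜ∂ₓT = ∂ₓ∂ₜT` with `N` gives the
equation for `κ`; pairing it with `B` shows that the `B`-component of `∂ₜN` is `κ_xx/κ - τ²`; and
pairing `∂ₜ∂ₓN = ∂ₓ∂ₜN` with `B` then gives the equation for `τ`. Only inner products are ever
differentiated, so `∂ₜN` and `∂ₜB` never have to be expanded in the frame.
-/

noncomputable section

/-- Euclidean dot product on `ℝ³`. -/
def dot3 (a b : Fin 3 → ℝ) : ℝ := a 0 * b 0 + a 1 * b 1 + a 2 * b 2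

/-- Cross product on `ℝ³`. -/
def cross3 (a b : Fin 3 → ℝ) : Fin 3 → ℝ :=
  ![a 1 * b 2 - a 2 * b 1, a 2 * b 0 - a 0 * b 2, a 0 * b 1 - a 1 * b 0]

/-- Partial derivative with respect to the first variable `t`. -/
def pt {E : Type*} [NormedAddCommGroup E] [NormedSpace ℝ E]
    (f : ℝ × ℝ → E) : ℝ × ℝ → E := fun p => deriv (fun s => f (s, p.2)) p.1

/-- Partial derivative with respect to the second variable `x`. -/
def px {E : Type*} [NormedAddCommGroup E] [NormedSpace ℝ E]
    (f : ℝ × ℝ → E) : ℝ × ℝ → E := fun p => deriv (fun s => f (p.1, s)) p.2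

open scoped ContDiff

section PartialDerivatives

variable {E : Type*} [NormedAddCommGroup E] [NormedSpace ℝ E] {f : ℝ × ℝ → E} {p : ℝ × ℝ}

lemma hasDerivAt_pt (hf : DifferentiableAt ℝ f p) :
    HasDerivAt (fun s => f (s, p.2)) (pt f p) p.1 :=
  (hf.comp p.1 (differentiableAt_id.prodMk (differentiableAt_const _))).hasDerivAt

lemma hasDerivAt_px (hf : DifferentiableAt ℝ f p) :
    HasDerivAt (fun s => f (p.1, s)) (px f p) p.2 :=
  (hf.comp p.2 ((differentiableAt_const _).prodMk differentiableAt_id)).hasDerivAt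

lemma pt_eq_fderiv (hf : DifferentiableAt ℝ f p) : pt f p = fderiv ℝ f p (1, 0) :=
  (hf.hasFDerivAt.comp_hasDerivAt p.1
    ((hasDerivAt_id p.1).prodMk (hasDerivAt_const _ _))).deriv

lemma px_eq_fderiv (hf : DifferentiableAt ℝ f p) : px f p = fderiv ℝ f p (0, 1) :=
  (hf.hasFDerivAt.comp_hasDerivAt p.2
    ((hasDerivAt_const _ _).prodMk (hasDerivAt_id p.2))).deriv

lemma pt_eq_fderiv_apply (hf : Differentiable ℝ f) : pt f = fun q => fderiv ℝ f q (1, 0) :=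
  funext fun q => pt_eq_fderiv (hf q)

lemma px_eq_fderiv_apply (hf : Differentiable ℝ f) : px f = fun q => fderiv ℝ f q (0, 1) :=
  funext fun q => px_eq_fderiv (hf q)

lemma ContDiff.pt {m n : ℕ∞ω} (hf : ContDiff ℝ n f) (hmn : m + 1 ≤ n) : ContDiff ℝ m (pt f) := by
  have hn : n ≠ 0 := ne_bot_of_le_ne_bot one_ne_zero (le_add_self.trans hmn)
  rw [pt_eq_fderiv_apply (hf.differentiable hn)]
  exact (hf.fderiv_right hmn).clm_apply contDiff_const

lemma ContDiff.px {m n : ℕ∞ω} (hf : ContDiff ℝ n f) (hmn : m + 1 ≤ n) : ContDiff ℝ m (px f) := by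
  have hn : n ≠ 0 := ne_bot_of_le_ne_bot one_ne_zero (le_add_self.trans hmn)
  rw [px_eq_fderiv_apply (hf.differentiable hn)]
  exact (hf.fderiv_right hmn).clm_apply contDiff_const

lemma pt_px_comm (hf : ContDiff ℝ 2 f) (p : ℝ × ℝ) : pt (px f) p = px (pt f) p := by
  have hf₁ : Differentiable ℝ f := hf.differentiable (by simp)
  have hf' : Differentiable ℝ (fderiv ℝ f) :=
    (hf.fderiv_right (m := 1) le_rfl).differentiable one_ne_zero
  rw [px_eq_fderiv_apply hf₁, pt_eq_fderiv_apply hf₁,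
    pt_eq_fderiv ((hf' p).clm_apply (differentiableAt_const _)),
    px_eq_fderiv ((hf' p).clm_apply (differentiableAt_const _)),
    fderiv_clm_apply (hf' p) (differentiableAt_const _),
    fderiv_clm_apply (hf' p) (differentiableAt_const _)]
  simpa using (hf.contDiffAt.isSymmSndFDerivAt (by simp)) (1, 0) (0, 1)

lemma pt_const (c : E) (p : ℝ × ℝ) : pt (fun _ => c) p = 0 :=
  deriv_const _ _

end PartialDerivatives

section Dot3

lemma dot3_comm (a b : Fin 3 → ℝ) : dot3 a b = dot3 b a := by
  simp only [dot3]; ring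

lemma dot3_add_left (a b c : Fin 3 → ℝ) : dot3 (a + b) c = dot3 a c + dot3 b c := by
  simp only [dot3, Pi.add_apply]; ring

lemma dot3_smul_left (r : ℝ) (a b : Fin 3 → ℝ) : dot3 (r • a) b = r * dot3 a b := by
  simp only [dot3, Pi.smul_apply, smul_eq_mul]; ring

lemma dot3_add_right (a b c : Fin 3 → ℝ) : dot3 a (b + c) = dot3 a b + dot3 a c := by
  simp only [dot3, Pi.add_apply]; ring

lemma dot3_smul_right (r : ℝ) (a b : Fin 3 → ℝ) : dot3 a (r • b) = r * dot3 a b := by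
  simp only [dot3, Pi.smul_apply, smul_eq_mul]; ring

lemma HasDerivAt.dot3 {u w : ℝ → Fin 3 → ℝ} {u' w' : Fin 3 → ℝ} {s : ℝ}
    (hu : HasDerivAt u u' s) (hw : HasDerivAt w w' s) :
    HasDerivAt (fun s => dot3 (u s) (w s)) (dot3 u' (w s) + dot3 (u s) w') s := by
  have hc (i : Fin 3) : HasDerivAt (fun s => u s i * w s i) (u' i * w s i + u s i * w' i) s :=
    (hasDerivAt_pi.1 hu i).mul (hasDerivAt_pi.1 hw i)
  exact (((hc 0).add (hc 1)).add (hc 2)).congr_deriv (by simp only [_root_.dot3]; ring)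

variable {u w : ℝ × ℝ → Fin 3 → ℝ} {p : ℝ × ℝ}

lemma pt_dot3 (hu : DifferentiableAt ℝ u p) (hw : DifferentiableAt ℝ w p) :
    pt (fun q => dot3 (u q) (w q)) p = dot3 (pt u p) (w p) + dot3 (u p) (pt w p) :=
  ((hasDerivAt_pt hu).dot3 (hasDerivAt_pt hw)).deriv

lemma px_dot3 (hu : DifferentiableAt ℝ u p) (hw : DifferentiableAt ℝ w p) :
    px (fun q => dot3 (u q) (w q)) p = dot3 (px u p) (w p) + dot3 (u p) (px w p) :=
  ((hasDerivAt_px hu).dot3 (hasDerivAt_px hw)).deriv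

lemma dot3_pt_add_dot3_pt_of_dot3_eq_const {c : ℝ} (hu : DifferentiableAt ℝ u p)
    (hw : DifferentiableAt ℝ w p) (huw : ∀ q, dot3 (u q) (w q) = c) :
    dot3 (pt u p) (w p) + dot3 (u p) (pt w p) = 0 := by
  rw [← pt_dot3 hu hw, funext huw, pt_const]

lemma dot3_pt_self_of_dot3_self_eq_one (hu : DifferentiableAt ℝ u p)
    (huu : ∀ q, dot3 (u q) (u q) = 1) : dot3 (pt u p) (u p) = 0 := by
  have h := dot3_pt_add_dot3_pt_of_dot3_eq_const hu hu huu
  rw [dot3_comm (u p)] at h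
  linarith

/-- `∂ₜ∂ₓu = ∂ₓ∂ₜu`, paired with `w` and rearranged by the product rule. -/
lemma pt_dot3_px_sub_eq (hu : ContDiff ℝ 2 u) (hw : Differentiable ℝ w) (p : ℝ × ℝ) :
    pt (fun q => dot3 (px u q) (w q)) p - dot3 (px u p) (pt w p)
      = px (fun q => dot3 (pt u q) (w q)) p - dot3 (pt u p) (px w p) := by
  rw [pt_dot3 ((hu.px le_rfl).differentiable one_ne_zero p) (hw p),
    px_dot3 ((hu.pt le_rfl).differentiable one_ne_zero p) (hw p), pt_px_comm hu]
  ring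

end Dot3

structure HeisenbergFrenetFlow (T N B : ℝ × ℝ → Fin 3 → ℝ) (κ τ : ℝ × ℝ → ℝ) : Prop where
  contDiff_T : ContDiff ℝ ∞ T
  contDiff_N : ContDiff ℝ ∞ N
  contDiff_B : ContDiff ℝ ∞ B
  contDiff_κ : ContDiff ℝ ∞ κ
  contDiff_τ : ContDiff ℝ ∞ τ
  dot3_N_N : ∀ p, dot3 (N p) (N p) = 1
  dot3_B_B : ∀ p, dot3 (B p) (B p) = 1
  dot3_T_N : ∀ p, dot3 (T p) (N p) = 0
  dot3_T_B : ∀ p, dot3 (T p) (B p) = 0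
  dot3_N_B : ∀ p, dot3 (N p) (B p) = 0
  κ_ne_zero : ∀ p, κ p ≠ 0
  px_T : ∀ p, px T p = κ p • N p
  px_N : ∀ p, px N p = (-κ p) • T p + τ p • B p
  px_B : ∀ p, px B p = (-τ p) • N p
  pt_T : ∀ p, pt T p = (-(κ p * τ p)) • N p + (px κ p) • B p

namespace HeisenbergFrenetFlow

variable {T N B : ℝ × ℝ → Fin 3 → ℝ} {κ τ : ℝ × ℝ → ℝ}

lemma dot3_pt_T_T (h : HeisenbergFrenetFlow T N B κ τ) (p : ℝ × ℝ) :
    dot3 (pt T p) (T p) = 0 := by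
  rw [h.pt_T, dot3_add_left, dot3_smul_left, dot3_smul_left, dot3_comm (N p), h.dot3_T_N,
    dot3_comm (B p), h.dot3_T_B]
  ring

lemma dot3_pt_T_N (h : HeisenbergFrenetFlow T N B κ τ) (p : ℝ × ℝ) :
    dot3 (pt T p) (N p) = -(κ p * τ p) := by
  rw [h.pt_T, dot3_add_left, dot3_smul_left, dot3_smul_left, h.dot3_N_N, dot3_comm (B p),
    h.dot3_N_B]
  ring

lemma dot3_pt_T_B (h : HeisenbergFrenetFlow T N B κ τ) (p : ℝ × ℝ) :
    dot3 (pt T p) (B p) = px κ p := by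
  rw [h.pt_T, dot3_add_left, dot3_smul_left, dot3_smul_left, h.dot3_B_B, h.dot3_N_B]
  ring

lemma dot3_pt_N_N (h : HeisenbergFrenetFlow T N B κ τ) (p : ℝ × ℝ) :
    dot3 (pt N p) (N p) = 0 :=
  dot3_pt_self_of_dot3_self_eq_one (h.contDiff_N.differentiable (by simp) p) h.dot3_N_N

lemma dot3_pt_B_B (h : HeisenbergFrenetFlow T N B κ τ) (p : ℝ × ℝ) :
    dot3 (pt B p) (B p) = 0 :=
  dot3_pt_self_of_dot3_self_eq_one (h.contDiff_B.differentiable (by simp) p) h.dot3_B_B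

lemma dot3_T_pt_B (h : HeisenbergFrenetFlow T N B κ τ) (p : ℝ × ℝ) :
    dot3 (T p) (pt B p) = -px κ p := by
  have h0 := dot3_pt_add_dot3_pt_of_dot3_eq_const (h.contDiff_T.differentiable (by simp) p)
    (h.contDiff_B.differentiable (by simp) p) h.dot3_T_B
  rw [h.dot3_pt_T_B] at h0
  linarith

lemma dot3_pt_N_B (h : HeisenbergFrenetFlow T N B κ τ) (p : ℝ × ℝ) :
    dot3 (pt N p) (B p) = px (px κ) p / κ p - τ p ^ 2 := by
  have hmixed := pt_dot3_px_sub_eq (contDiff_infty.1 h.contDiff_T 2)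
    (h.contDiff_B.differentiable (by simp)) p
  have hTB : (fun q => dot3 (px T q) (B q)) = fun _ => 0 :=
    funext fun q => by rw [h.px_T, dot3_smul_left, h.dot3_N_B, mul_zero]
  have hNB := dot3_pt_add_dot3_pt_of_dot3_eq_const (h.contDiff_N.differentiable (by simp) p)
    (h.contDiff_B.differentiable (by simp) p) h.dot3_N_B
  rw [hTB, pt_const, funext h.dot3_pt_T_B, h.px_T, h.px_B, dot3_smul_left, dot3_smul_right,
    h.dot3_pt_T_N] at hmixed
  field_simp [h.κ_ne_zero p]
  linear_combination hmixed + κ p * hNB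

lemma pt_κ (h : HeisenbergFrenetFlow T N B κ τ) (p : ℝ × ℝ) :
    pt κ p = -(κ p) * px τ p - 2 * (px κ p) * τ p := by
  have hmixed := pt_dot3_px_sub_eq (contDiff_infty.1 h.contDiff_T 2)
    (h.contDiff_N.differentiable (by simp)) p
  have hTN : (fun q => dot3 (px T q) (N q)) = κ :=
    funext fun q => by rw [h.px_T, dot3_smul_left, h.dot3_N_N, mul_one]
  have hκτ : px (fun q => dot3 (pt T q) (N q)) p = -(px κ p * τ p + κ p * px τ p) := by
    rw [funext h.dot3_pt_T_N]
    exact ((hasDerivAt_px (h.contDiff_κ.differentiable (by simp) p)).mul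
      (hasDerivAt_px (h.contDiff_τ.differentiable (by simp) p))).neg.deriv
  rw [hTN, hκτ, h.px_T, h.px_N, dot3_smul_left, dot3_comm (N p), h.dot3_pt_N_N, dot3_add_right,
    dot3_smul_right, dot3_smul_right, h.dot3_pt_T_T, h.dot3_pt_T_B] at hmixed
  linear_combination hmixed

lemma pt_τ (h : HeisenbergFrenetFlow T N B κ τ) (p : ℝ × ℝ) :
    pt τ p = px (fun q => px (px κ) q / κ q - (τ q) ^ 2 + (1 / 2) * (κ q) ^ 2) p := by
  have hmixed := pt_dot3_px_sub_eq (contDiff_infty.1 h.contDiff_N 2)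
    (h.contDiff_B.differentiable (by simp)) p
  have hNB : (fun q => dot3 (px N q) (B q)) = τ := funext fun q => by
    rw [h.px_N, dot3_add_left, dot3_smul_left, dot3_smul_left, h.dot3_T_B, h.dot3_B_B]
    ring
  have hκ : ContDiff ℝ ∞ κ := h.contDiff_κ
  have hβ : ContDiff ℝ ∞ (fun q => px (px κ) q / κ q - τ q ^ 2) :=
    ((hκ.px le_rfl).px le_rfl |>.div hκ h.κ_ne_zero).sub (h.contDiff_τ.pow 2)
  have hpx : px (fun q => px (px κ) q / κ q - τ q ^ 2 + 1 / 2 * κ q ^ 2) p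
      = px (fun q => px (px κ) q / κ q - τ q ^ 2) p + κ p * px κ p :=
    ((hasDerivAt_px (hβ.differentiable (by simp) p)).add
      (((hasDerivAt_px (hκ.differentiable (by simp) p)).pow 2).const_mul (1 / 2))
      |>.congr_deriv
        (by simp only [Nat.cast_ofNat, Prod.mk.eta, Nat.add_one_sub_one, pow_one]; ring)).deriv
  rw [hNB, funext h.dot3_pt_N_B, h.px_N, h.px_B, dot3_add_left, dot3_smul_left, dot3_smul_left,
    h.dot3_T_pt_B, dot3_comm (B p), h.dot3_pt_B_B, dot3_smul_right, h.dot3_pt_N_N] at hmixed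
  rw [hpx]
  linear_combination hmixed

end HeisenbergFrenetFlow

theorem vortex_filament_equations_general
    (T N B : ℝ × ℝ → Fin 3 → ℝ) (κ τ : ℝ × ℝ → ℝ)
    (hT : ContDiff ℝ (⊤ : ℕ∞) T) (hN : ContDiff ℝ (⊤ : ℕ∞) N)
    (hB : ContDiff ℝ (⊤ : ℕ∞) B)
    (hκ : ContDiff ℝ (⊤ : ℕ∞) κ) (hτ : ContDiff ℝ (⊤ : ℕ∞) τ)
    (horthNN : ∀ p, dot3 (N p) (N p) = 1)
    (horthBB : ∀ p, dot3 (B p) (B p) = 1)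
    (horthTN : ∀ p, dot3 (T p) (N p) = 0)
    (horthTB : ∀ p, dot3 (T p) (B p) = 0)
    (horthNB : ∀ p, dot3 (N p) (B p) = 0)
    (hκpos : ∀ p, 0 < κ p)
    (hTx : ∀ p, px T p = κ p • N p)
    (hNx : ∀ p, px N p = (-κ p) • T p + τ p • B p)
    (hBx : ∀ p, px B p = (-τ p) • N p)
    (hTt : ∀ p, pt T p = (-(κ p * τ p)) • N p + (px κ p) • B p) :
    (∀ p, pt κ p = -(κ p) * px τ p - 2 * (px κ p) * τ p) ∧
    (∀ p, pt τ p
      = px (fun q => px (px κ) q / κ q - (τ q) ^ 2 + (1 / 2) * (κ q) ^ 2) p) := by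
  have h : HeisenbergFrenetFlow T N B κ τ := ⟨hT, hN, hB, hκ, hτ, horthNN, horthBB, horthTN,
    horthTB, horthNB, fun p => (hκpos p).ne', hTx, hNx, hBx, hTt⟩
  exact ⟨h.pt_κ, h.pt_τ⟩

/-- Under the Heisenberg (vortex filament) flow `T_t = -κτ N + κ_x B`, the
curvature and torsion satisfy the vortex filament equations. -/
theorem vortex_filament_equations
    (T N B : ℝ × ℝ → Fin 3 → ℝ) (κ τ : ℝ × ℝ → ℝ)
    (hT : ContDiff ℝ (⊤ : ℕ∞) T) (hN : ContDiff ℝ (⊤ : ℕ∞) N)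
    (hB : ContDiff ℝ (⊤ : ℕ∞) B)
    (hκ : ContDiff ℝ (⊤ : ℕ∞) κ) (hτ : ContDiff ℝ (⊤ : ℕ∞) τ)
    (horthTT : ∀ p, dot3 (T p) (T p) = 1)
    (horthNN : ∀ p, dot3 (N p) (N p) = 1)
    (horthBB : ∀ p, dot3 (B p) (B p) = 1)
    (horthTN : ∀ p, dot3 (T p) (N p) = 0)
    (horthTB : ∀ p, dot3 (T p) (B p) = 0)
    (horthNB : ∀ p, dot3 (N p) (B p) = 0)
    (hBTN : ∀ p, B p = cross3 (T p) (N p))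
    (hκpos : ∀ p, 0 < κ p)
    (hTx : ∀ p, px T p = κ p • N p)
    (hNx : ∀ p, px N p = (-κ p) • T p + τ p • B p)
    (hBx : ∀ p, px B p = (-τ p) • N p)
    (hTt : ∀ p, pt T p = (-(κ p * τ p)) • N p + (px κ p) • B p) :
    (∀ p, pt κ p = -(κ p) * px τ p - 2 * (px κ p) * τ p) ∧
    (∀ p, pt τ p
      = px (fun q => px (px κ) q / κ q - (τ q) ^ 2 + (1 / 2) * (κ q) ^ 2) p) :=
  vortex_filament_equations_general T N B κ τ hT hN hB hκ hτ horthNN horthBB horthTN horthTB horthNB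
    hκpos hTx hNx hBx hTt
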